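/- arXiv:2101.05246 — 2 statements merged into one kernel-verified Lean document; each statement's English description precedes it below -/
import Mathlib

section
/- Let E be an elliptic curve over an algebraically closed field and let h be an automorphism of E fixing the origin that also fixes a point P of exact order m ≥ 2 in the group law. If h is nontrivial and the characteristic does not divide the order of h, then m ≤ 3; moreover if m = 3 then h has order dividing 3 (h(P)=P with P of order 3 forces h to act trivially on P, so h is an order-3 automorphism when nontrivial). -/
/-!
An automorphism of `(E, O)` is a change of variables `(u, r, s, t)` fixing the Weierstrass
equation, and it acts on `E` by a group homomorphism. If `u² ≠ 1`, all of its affine fixed points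
lie on the vertical line `(1 - u²) x = r`, so `2P` is `O`, `P` or `-P`, and `2P = O` or `3P = O`.
If `u² = 1`, fixing `P` forces `r = 0`. Then `u = 1` forces `2s = 2t = 0`, so the automorphism
is an involution, trivial unless the characteristic is `2`, which would divide its order; and
`u = -1` makes it the negation map, so `P = -P`. When `m = 3`, both `P` and `-P = 2P` are fixed,
which forces `u³ = 1`; then the cube of the automorphism has `u = 1` and `r = 0`, and is trivial
by the same argument.
-/

namespace WeierstrassCurve.VariableChange

section Coordinates

variable {F : Type*} [Field F] (C : VariableChange F)

/-- `C • W` is obtained from `W` by substituting `(X, Y) = (u²X' + r, u³Y' + u²sX' + t)`, so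
`(newX x, newY x y)` are the coordinates on `C • W` of the point `(x, y)` of `W`. -/
def newX (x : F) : F := (↑C.u⁻¹ : F) ^ 2 * (x - C.r)

def newY (x y : F) : F := (↑C.u⁻¹ : F) ^ 3 * (y - C.s * x + C.r * C.s - C.t)

lemma newX_injective : Function.Injective C.newX := fun _ _ h => by
  linear_combination mul_left_cancel₀ (pow_ne_zero 2 C.u⁻¹.ne_zero) h

lemma newY_injective (x : F) : Function.Injective (C.newY x) := fun _ _ h => by
  linear_combination mul_left_cancel₀ (pow_ne_zero 3 C.u⁻¹.ne_zero) h

variable (W : WeierstrassCurve F)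

lemma equation_newX_newY {x y : F} (h : W.toAffine.Equation x y) :
    (C • W).toAffine.Equation (C.newX x) (C.newY x y) := by
  rw [Affine.equation_iff] at h ⊢
  simp only [newX, newY, variableChange_a₁, variableChange_a₂, variableChange_a₃,
    variableChange_a₄, variableChange_a₆]
  linear_combination (↑C.u⁻¹ : F) ^ 6 * h

lemma negY_newX_newY (x y : F) :
    (C • W).toAffine.negY (C.newX x) (C.newY x y) = C.newY x (W.toAffine.negY x y) := by
  simp only [Affine.negY, newX, newY, variableChange_a₁, variableChange_a₃]
  ring

lemma addX_newX (x₁ x₂ L : F) :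
    (C • W).toAffine.addX (C.newX x₁) (C.newX x₂) (↑C.u⁻¹ * (L - C.s)) =
      C.newX (W.toAffine.addX x₁ x₂ L) := by
  simp only [Affine.addX, newX, variableChange_a₁, variableChange_a₂]
  ring

lemma addY_newX_newY (x₁ x₂ y₁ L : F) :
    (C • W).toAffine.addY (C.newX x₁) (C.newX x₂) (C.newY x₁ y₁) (↑C.u⁻¹ * (L - C.s)) =
      C.newY (W.toAffine.addX x₁ x₂ L) (W.toAffine.addY x₁ x₂ y₁ L) := by
  simp only [Affine.addY, Affine.negAddY, Affine.negY, Affine.addX, newX, newY,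
    variableChange_a₁, variableChange_a₂, variableChange_a₃]
  ring

lemma slope_newX_newY [DecidableEq F] {x₁ x₂ y₁ y₂ : F} (h₁ : W.toAffine.Equation x₁ y₁)
    (h₂ : W.toAffine.Equation x₂ y₂) (hxy : ¬(x₁ = x₂ ∧ y₁ = W.toAffine.negY x₂ y₂)) :
    (C • W).toAffine.slope (C.newX x₁) (C.newX x₂) (C.newY x₁ y₁) (C.newY x₂ y₂) =
      ↑C.u⁻¹ * (W.toAffine.slope x₁ x₂ y₁ y₂ - C.s) := by
  by_cases hx : x₁ = x₂
  · have hy : y₁ ≠ W.toAffine.negY x₂ y₂ := fun hy => hxy ⟨hx, hy⟩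
    obtain rfl := hx
    obtain rfl := Affine.Y_eq_of_Y_ne h₁ h₂ rfl hy
    have hy' : C.newY x₁ y₁ ≠ (C • W).toAffine.negY (C.newX x₁) (C.newY x₁ y₁) := by
      rw [negY_newX_newY]
      exact (C.newY_injective x₁).ne hy
    have hL : W.toAffine.slope x₁ x₁ y₁ y₁ * (y₁ - W.toAffine.negY x₁ y₁) =
        3 * x₁ ^ 2 + 2 * W.a₂ * x₁ + W.a₄ - W.a₁ * y₁ := by
      rw [Affine.slope_of_Y_ne rfl hy, div_mul_cancel₀ _ (sub_ne_zero.2 hy)]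
    rw [Affine.slope_of_Y_ne rfl hy', div_eq_iff (sub_ne_zero.2 hy'), negY_newX_newY]
    simp only [Affine.negY, newX, newY, variableChange_a₁, variableChange_a₂,
      variableChange_a₄] at hL ⊢
    linear_combination -(↑C.u⁻¹ : F) ^ 4 * hL
  · have hx' : C.newX x₁ ≠ C.newX x₂ := C.newX_injective.ne hx
    have hL : W.toAffine.slope x₁ x₂ y₁ y₂ * (x₁ - x₂) = y₁ - y₂ := by
      rw [Affine.slope_of_X_ne hx, div_mul_cancel₀ _ (sub_ne_zero.2 hx)]
    rw [Affine.slope_of_X_ne hx', div_eq_iff (sub_ne_zero.2 hx')]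
    simp only [newX, newY] at hL ⊢
    linear_combination -(↑C.u⁻¹ : F) ^ 3 * hL

end Coordinates

section Automorphisms

variable {R : Type*} [CommRing R] (W : WeierstrassCurve R) {C : VariableChange R}

lemma two_mul_s_eq_zero (hW : C • W = W) (hu : C.u = 1) : 2 * C.s = 0 := by
  have ha₁ := congrArg a₁ hW
  rw [variableChange_a₁, hu, inv_one, Units.val_one] at ha₁
  linear_combination ha₁

lemma two_mul_t_eq_zero (hW : C • W = W) (hu : C.u = 1) (hr : C.r = 0) : 2 * C.t = 0 := by
  have ha₃ := congrArg a₃ hW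
  rw [variableChange_a₃, hu, hr, inv_one, Units.val_one] at ha₃
  linear_combination ha₃

lemma sq_eq_one_of_u_eq_one_of_r_eq_zero (hW : C • W = W) (hu : C.u = 1) (hr : C.r = 0) :
    C ^ 2 = 1 := by
  rw [sq, mul_def]
  ext <;> simp only [hu, hr, one_mul, Units.val_one, one_pow, mul_one, zero_mul, add_zero]
  · rfl
  · rfl
  · exact (two_mul C.s).symm.trans (two_mul_s_eq_zero W hW hu)
  · exact (two_mul C.t).symm.trans (two_mul_t_eq_zero W hW hu hr)

lemma eq_one_of_u_eq_one_of_r_eq_zero [NoZeroDivisors R] (hW : C • W = W) (hu : C.u = 1)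
    (hr : C.r = 0) (h2 : 2 ∣ orderOf C → (2 : R) ≠ 0) : C = 1 := by
  by_contra hC
  have hord : orderOf C = 2 := orderOf_eq_prime (sq_eq_one_of_u_eq_one_of_r_eq_zero W hW hu hr) hC
  have h2 : (2 : R) ≠ 0 := h2 hord.symm.dvd
  exact hC (VariableChange.ext hu hr
    ((mul_eq_zero.1 (two_mul_s_eq_zero W hW hu)).resolve_left h2)
    ((mul_eq_zero.1 (two_mul_t_eq_zero W hW hu hr)).resolve_left h2))

lemma negY_eq_self_of_u_sq_eq_one [IsDomain R] (hW : C • W = W) (hC : C ≠ 1)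
    (h2 : 2 ∣ orderOf C → (2 : R) ≠ 0)
    (hu : (C.u : R) ^ 2 = 1) {x y : R} (hx : (C.u : R) ^ 2 * x + C.r = x)
    (hy : (C.u : R) ^ 3 * y + (C.u : R) ^ 2 * C.s * x + C.t = y) :
    W.toAffine.negY x y = y := by
  have hr : C.r = 0 := by linear_combination hx - x * hu
  have hu1 : (C.u : R) ≠ 1 := fun hu1 =>
    hC (eq_one_of_u_eq_one_of_r_eq_zero W hW (Units.val_eq_one.1 hu1) hr h2)
  have hu : (C.u : R) = -1 := (sq_eq_one_iff.1 hu).resolve_left hu1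
  have hv : (↑C.u⁻¹ : R) = -1 := by
    linear_combination -C.u.inv_mul + (↑C.u⁻¹ : R) * hu
  have h2 : (2 : R) ≠ 0 := fun h2 => hu1 (by linear_combination hu - h2)
  have ha₁ := congrArg a₁ hW
  have ha₃ := congrArg a₃ hW
  rw [variableChange_a₁, hv] at ha₁
  rw [variableChange_a₃, hv, hr] at ha₃
  rw [hu] at hy
  refine sub_eq_zero.1 ((mul_eq_zero.1 (?_ : 2 * (W.toAffine.negY x y - y) = 0)).resolve_left h2)
  rw [Affine.negY]
  linear_combination 2 * hy + x * ha₁ + ha₃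

lemma pow_three_eq_one_of_fixes_two_points [IsDomain R] (hW : C • W = W)
    (h2 : 2 ∣ orderOf (C ^ 3) → (2 : R) ≠ 0)
    {x y₁ y₂ : R} (hx : (C.u : R) ^ 2 * x + C.r = x)
    (hy₁ : (C.u : R) ^ 3 * y₁ + (C.u : R) ^ 2 * C.s * x + C.t = y₁)
    (hy₂ : (C.u : R) ^ 3 * y₂ + (C.u : R) ^ 2 * C.s * x + C.t = y₂) (hy : y₁ ≠ y₂) :
    C ^ 3 = 1 := by
  have hu : (C.u : R) ^ 3 = 1 := by
    refine sub_eq_zero.1 ((mul_eq_zero.1 (?_ : ((C.u : R) ^ 3 - 1) * (y₁ - y₂) = 0)).resolve_right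
      (sub_ne_zero.2 hy))
    linear_combination hy₁ - hy₂
  have hW3 : C ^ 3 • W = W := (MulAction.stabilizer _ W).pow_mem hW 3
  refine eq_one_of_u_eq_one_of_r_eq_zero W hW3 ?_ ?_ h2
  · rw [pow_three']
    show C.u * C.u * C.u = 1
    ext
    push_cast
    linear_combination hu
  · rw [pow_three']
    show (C.r * (C.u : R) ^ 2 + C.r) * (C.u : R) ^ 2 + C.r = 0
    linear_combination ((C.u : R) ^ 4 + (C.u : R) ^ 2 + 1) * hx - x * (1 + (C.u : R) ^ 3) * hu

end Automorphisms

section Points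

variable {F : Type*} [Field F] (C : VariableChange F) (W : WeierstrassCurve F) [W.IsElliptic]
  {W' : WeierstrassCurve F} (hW : C • W = W')

include hW in
lemma nonsingular_newX_newY {x y : F} (h : W.toAffine.Nonsingular x y) :
    W'.toAffine.Nonsingular (C.newX x) (C.newY x y) := by
  subst hW
  exact Affine.equation_iff_nonsingular.mp (C.equation_newX_newY W h.1)

noncomputable def toPoint : W.toAffine.Point → W'.toAffine.Point
  | 0 => 0
  | .some _ _ h => .some _ _ (C.nonsingular_newX_newY W hW h)

@[simp]
lemma toPoint_zero : C.toPoint W hW 0 = 0 := rfl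

@[simp]
lemma toPoint_some {x y : F} (h : W.toAffine.Nonsingular x y) :
    C.toPoint W hW (.some x y h) = .some _ _ (C.nonsingular_newX_newY W hW h) := rfl

variable [DecidableEq F]

lemma toPoint_add (P Q : W.toAffine.Point) :
    C.toPoint W hW (P + Q) = C.toPoint W hW P + C.toPoint W hW Q := by
  subst hW
  rcases P with _ | @⟨x₁, y₁, h₁⟩
  · rw [← Affine.Point.zero_def, zero_add, toPoint_zero, zero_add]
  rcases Q with _ | @⟨x₂, y₂, h₂⟩
  · rw [← Affine.Point.zero_def, add_zero, toPoint_zero, add_zero]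
  by_cases hxy : x₁ = x₂ ∧ y₁ = W.toAffine.negY x₂ y₂
  · obtain ⟨rfl, rfl⟩ := hxy
    rw [Affine.Point.add_of_Y_eq rfl rfl, toPoint_some, toPoint_some, toPoint_zero,
      Affine.Point.add_of_Y_eq rfl (C.negY_newX_newY W x₁ y₂).symm]
  · have hxy' : ¬(C.newX x₁ = C.newX x₂ ∧
        C.newY x₁ y₁ = (C • W).toAffine.negY (C.newX x₂) (C.newY x₂ y₂)) := by
      rintro ⟨hx, hy⟩
      obtain rfl := C.newX_injective hx
      rw [negY_newX_newY] at hy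
      exact hxy ⟨rfl, C.newY_injective x₁ hy⟩
    rw [Affine.Point.add_some hxy, toPoint_some, toPoint_some, toPoint_some,
      Affine.Point.add_some hxy', Affine.Point.some.injEq, C.slope_newX_newY W h₁.1 h₂.1 hxy,
      addX_newX, addY_newX_newY]
    exact ⟨rfl, rfl⟩

@[simps]
noncomputable def pointHom : W.toAffine.Point →+ W'.toAffine.Point where
  toFun := C.toPoint W hW
  map_zero' := rfl
  map_add' := C.toPoint_add W hW

lemma pointHom_some_eq_self_iff (hW : C • W = W) {x y : F} (h : W.toAffine.Nonsingular x y) :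
    C.pointHom W hW (.some x y h) = .some x y h ↔
      (C.u : F) ^ 2 * x + C.r = x ∧ (C.u : F) ^ 3 * y + (C.u : F) ^ 2 * C.s * x + C.t = y := by
  have hu2 := pow_mul_pow_eq_one 2 C.u.mul_inv
  have hu3 := pow_mul_pow_eq_one 3 C.u.mul_inv
  rw [pointHom_apply, toPoint_some, Affine.Point.some.injEq, newX, newY]
  constructor
  · rintro ⟨hx, hy⟩
    have hx' : (C.u : F) ^ 2 * x + C.r = x := by
      linear_combination -(C.u : F) ^ 2 * hx + (x - C.r) * hu2
    refine ⟨hx', ?_⟩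
    linear_combination -(C.u : F) ^ 3 * hy + (y - C.s * x + C.r * C.s - C.t) * hu3 + C.s * hx'
  · rintro ⟨hx, hy⟩
    refine ⟨?_, ?_⟩
    · linear_combination -(↑C.u⁻¹ : F) ^ 2 * hx + x * hu2
    · linear_combination (↑C.u⁻¹ : F) ^ 3 * C.s * hx - (↑C.u⁻¹ : F) ^ 3 * hy + y * hu3

lemma two_nsmul_eq_zero_or_three_nsmul_eq_zero (hW : C • W = W) (hC : C ≠ 1)
    (h2 : 2 ∣ orderOf C → (2 : F) ≠ 0) {P : W.toAffine.Point} (hP : C.pointHom W hW P = P) :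
    2 • P = 0 ∨ 3 • P = 0 := by
  rcases P with _ | @⟨x, y, h⟩
  · exact Or.inl (nsmul_zero 2)
  obtain ⟨hx, hy⟩ := (C.pointHom_some_eq_self_iff W hW h).1 hP
  by_cases hu : (C.u : F) ^ 2 = 1
  · rw [two_nsmul]
    exact Or.inl <| Affine.Point.add_self_of_Y_eq
      (negY_eq_self_of_u_sq_eq_one W hW hC h2 hu hx hy).symm
  have h2P : C.pointHom W hW (2 • .some x y h) = 2 • .some x y h := by rw [map_nsmul, hP]
  rcases h2Pdef : 2 • Affine.Point.some x y h with _ | @⟨x₂, y₂, h₂⟩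
  · exact Or.inl rfl
  rw [h2Pdef, pointHom_some_eq_self_iff] at h2P
  have hx₂ : x₂ = x := by
    refine sub_eq_zero.1 ((mul_eq_zero.1 (?_ : ((C.u : F) ^ 2 - 1) * (x₂ - x) = 0)).resolve_left
      (sub_ne_zero.2 hu))
    linear_combination h2P.1 - hx
  rcases (Affine.Point.X_eq_iff (h₁ := h₂) (h₂ := h)).1 hx₂ with h2P | h2P
  · rw [h2P, two_nsmul, add_eq_left] at h2Pdef
    exact absurd h2Pdef (Affine.Point.some_ne_zero h)
  · rw [succ_nsmul, h2Pdef, h2P, neg_add_cancel]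
    exact Or.inr rfl

end Points

end WeierstrassCurve.VariableChange

open WeierstrassCurve

open Classical in
theorem stmt6_general {k : Type*} [Field k]
    (E : WeierstrassCurve k) [E.IsElliptic]
    (φ : WeierstrassCurve.VariableChange k)
    (hφE : φ • E = E) (hφ1 : φ ≠ 1)
    (hcop : ∀ p : ℕ, p.Prime → p ∣ orderOf φ → (p : k) ≠ 0)
    (x y : k) (hxy : E.toAffine.Nonsingular x y)
    (m : ℕ)
    (hordP : addOrderOf (WeierstrassCurve.Affine.Point.some x y hxy) = m)
    (hfix : (φ.u : k) ^ 2 * x + φ.r = x ∧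
      (φ.u : k) ^ 3 * y + (φ.u : k) ^ 2 * φ.s * x + φ.t = y) :
    m ≤ 3 ∧ (m = 3 → orderOf φ ∣ 3) := by
  have h2 : 2 ∣ orderOf φ → (2 : k) ≠ 0 := by exact_mod_cast hcop 2 Nat.prime_two
  have hP := (φ.pointHom_some_eq_self_iff E hφE hxy).2 hfix
  have hm : m ∣ 2 ∨ m ∣ 3 := hordP ▸
    (φ.two_nsmul_eq_zero_or_three_nsmul_eq_zero E hφE hφ1 h2 hP).imp
      addOrderOf_dvd_of_nsmul_eq_zero addOrderOf_dvd_of_nsmul_eq_zero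
  refine ⟨by rcases hm with hm | hm <;> linarith [Nat.le_of_dvd (by norm_num) hm], fun hm3 => ?_⟩
  have hy : y ≠ E.toAffine.negY x y := fun hy => by
    have h3 : 3 ∣ 2 := hm3 ▸ hordP ▸ addOrderOf_dvd_of_nsmul_eq_zero
      ((two_nsmul _).trans (Affine.Point.add_self_of_Y_eq hy))
    omega
  have hnegP := congrArg Neg.neg hP
  rw [← map_neg, Affine.Point.neg_some, VariableChange.pointHom_some_eq_self_iff] at hnegP
  exact orderOf_dvd_of_pow_eq_one (VariableChange.pow_three_eq_one_of_fixes_two_points E hφE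
    (fun h => h2 (h.trans (orderOf_pow_dvd 3))) hfix.1 hfix.2 hnegP.2 hy)

open Classical in
/-- Let `E` be an elliptic curve over an algebraically closed field and let `h` be a nontrivial
automorphism of `E` fixing the origin (modelled as a variable change `φ ≠ 1` with
`E.variableChange φ = E`, acting on affine points by `(x, y) ↦ (u²x + r, u³y + u²sx + t)`)
that fixes an affine point `P = (x, y)` of exact order `m ≥ 2` in the group law.  If the
characteristic does not divide the order of `h`, then `m ≤ 3`; moreover if `m = 3` then `h`
has order dividing `3`. -/
theorem stmt6 {k : Type*} [Field k] [IsAlgClosed k]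
    (E : WeierstrassCurve k) [E.IsElliptic]
    (φ : WeierstrassCurve.VariableChange k)
    (hφE : φ • E = E) (hφ1 : φ ≠ 1)
    (hcop : ∀ p : ℕ, p.Prime → p ∣ orderOf φ → (p : k) ≠ 0)
    (x y : k) (hxy : E.toAffine.Nonsingular x y)
    (m : ℕ) (hm : 2 ≤ m)
    (hordP : addOrderOf (WeierstrassCurve.Affine.Point.some x y hxy) = m)
    (hfix : (φ.u : k) ^ 2 * x + φ.r = x ∧
      (φ.u : k) ^ 3 * y + (φ.u : k) ^ 2 * φ.s * x + φ.t = y) :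
    m ≤ 3 ∧ (m = 3 → orderOf φ ∣ 3) :=
  stmt6_general E φ hφE hφ1 hcop x y hxy m hordP hfix
end

section
/- Let L = I^{1,9} with basis e_0,...,e_9 as above and f = -3e_0 + e_1 + ... + e_9. Then the quotient lattice f^⊥ / Zf is an even negative-definite unimodular lattice of rank 8 (hence isomorphic to E_8 with negative definite form). -/
/-!
All coordinates of `f` are odd and `x² ≡ x (mod 2)`, so `f` is a characteristic vector:
`x·x ≡ x·f (mod 2)`, which makes the form even on `f^⊥`. Completing the square gives
`9 (x·x) + ∑ᵢ (3xᵢ + x₀)² = -6 x₀ (x·f)`, so on `f^⊥` the form is `≤ 0`, with equality exactly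
when all `xᵢ = -x₀/3`, i.e. on `ℤf`. Pairing with `f` is onto `ℤ` (it takes `-e₁` to `1`), so
`f^⊥` has rank `10 - 1 = 9`. Finally `I^{1,9}` is unimodular, so every functional is pairing with
some `y`, and `y ∈ f^⊥` as soon as the functional kills `f`.
-/

/-- The symmetric bilinear form of the odd unimodular lattice `I^{1,9}`. -/
def I19 (x y : Fin 10 → ℤ) : ℤ :=
  x 0 * y 0 - ∑ i : Fin 9, x i.succ * y i.succ

/-- The vector `f = -3e₀ + e₁ + ⋯ + e₉` in `I^{1,9}`. -/
def fI19 : Fin 10 → ℤ :=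
  (-3 : ℤ) • Pi.single 0 1 + ∑ i : Fin 9, Pi.single i.succ (1 : ℤ)

/-- Pairing with `f`, as a linear functional; its kernel is `f^⊥`. -/
def pairf : (Fin 10 → ℤ) →ₗ[ℤ] ℤ where
  toFun x := I19 x fI19
  map_add' x y := by
    simp only [I19, Pi.add_apply, add_mul, Finset.sum_add_distrib]
    ring
  map_smul' c x := by
    simp only [I19, Pi.smul_apply, smul_eq_mul, RingHom.id_apply, mul_assoc,
      Finset.mul_sum, mul_sub]

lemma I19_comm (x y : Fin 10 → ℤ) : I19 x y = I19 y x := by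
  simp only [I19, mul_comm]

lemma even_I19_self_sub_of_odd {y : Fin 10 → ℤ} (hy : ∀ j, Odd (y j)) (x : Fin 10 → ℤ) :
    Even (I19 x x - I19 x y) := by
  have h : ∀ j, Even (x j * x j - x j * y j) := fun j => by
    rw [← mul_sub, Int.even_mul, Int.even_sub, ← Int.not_odd_iff_even (n := y j)]
    have := hy j
    tauto
  have hsum : I19 x x - I19 x y =
      (x 0 * x 0 - x 0 * y 0) - ∑ i : Fin 9, (x i.succ * x i.succ - x i.succ * y i.succ) := by
    simp only [I19, Finset.sum_sub_distrib]
    ring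
  rw [hsum]
  exact (h 0).sub (Finset.even_sum _ fun i _ => h (Fin.succ i))

lemma fI19_zero : fI19 0 = -3 := by
  simp [fI19, Fin.succ_ne_zero]

lemma fI19_succ (i : Fin 9) : fI19 i.succ = 1 := by
  simp [fI19, Pi.single_apply, Fin.succ_ne_zero]

lemma I19_fI19 (x : Fin 10 → ℤ) : I19 x fI19 = -3 * x 0 - ∑ i : Fin 9, x i.succ := by
  simp only [I19, fI19_zero, fI19_succ, mul_one]
  ring

lemma odd_fI19 (j : Fin 10) : Odd (fI19 j) := by
  cases j using Fin.cases with
  | zero => rw [fI19_zero]; decide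
  | succ i => rw [fI19_succ]; decide

lemma nine_mul_I19_self_add_sum_sq (x : Fin 10 → ℤ) :
    9 * I19 x x + ∑ i : Fin 9, (3 * x i.succ + x 0) ^ 2 = -6 * x 0 * I19 x fI19 := by
  have hsq : ∀ i : Fin 9, (3 * x i.succ + x 0) ^ 2 =
      9 * (x i.succ * x i.succ) + 6 * x 0 * x i.succ + x 0 ^ 2 := fun i => by ring
  rw [I19_fI19]
  simp only [I19, hsq, Finset.sum_add_distrib, ← Finset.mul_sum, Finset.sum_const,
    Finset.card_univ, Fintype.card_fin, nsmul_eq_mul]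
  ring

lemma exists_eq_smul_fI19_iff (x : Fin 10 → ℤ) :
    (∃ n : ℤ, x = n • fI19) ↔ ∀ i : Fin 9, 3 * x i.succ + x 0 = 0 := by
  constructor
  · rintro ⟨n, rfl⟩ i
    simp only [Pi.smul_apply, smul_eq_mul, fI19_zero, fI19_succ]
    ring
  · intro h
    refine ⟨x (1 : Fin 9).succ, funext fun j => ?_⟩
    cases j using Fin.cases with
    | zero => simp only [Pi.smul_apply, smul_eq_mul, fI19_zero]; linarith [h 1]
    | succ i => simp only [Pi.smul_apply, smul_eq_mul, fI19_succ]; linarith [h 1, h i]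

lemma I19_self_nonpos {x : Fin 10 → ℤ} (hx : I19 x fI19 = 0) : I19 x x ≤ 0 := by
  have h := nine_mul_I19_self_add_sum_sq x
  rw [hx, mul_zero] at h
  have hnn : 0 ≤ ∑ i : Fin 9, (3 * x i.succ + x 0) ^ 2 :=
    Finset.sum_nonneg fun i _ => sq_nonneg _
  linarith

lemma I19_self_eq_zero_iff {x : Fin 10 → ℤ} (hx : I19 x fI19 = 0) :
    I19 x x = 0 ↔ ∃ n : ℤ, x = n • fI19 := by
  have h := nine_mul_I19_self_add_sum_sq x
  rw [hx, mul_zero] at h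
  calc I19 x x = 0 ↔ ∑ i : Fin 9, (3 * x i.succ + x 0) ^ 2 = 0 := by omega
    _ ↔ ∀ i : Fin 9, 3 * x i.succ + x 0 = 0 := by
      simp [Finset.sum_eq_zero_iff_of_nonneg, sq_nonneg]
    _ ↔ ∃ n : ℤ, x = n • fI19 := (exists_eq_smul_fI19_iff x).symm

lemma pairf_surjective : Function.Surjective pairf := by
  intro n
  refine ⟨n • -Pi.single (0 : Fin 9).succ 1, ?_⟩
  simp [pairf, I19_fI19, Fin.sum_univ_succ]

lemma finrank_ker_pairf : Module.finrank ℤ (LinearMap.ker pairf) = 9 := by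
  have h := (LinearMap.ker pairf).finrank_quotient_add_finrank
  rw [(pairf.quotKerEquivOfSurjective pairf_surjective).finrank_eq] at h
  simp only [Module.finrank_self, Module.finrank_fin_fun] at h
  omega

lemma exists_I19_eq_apply (φ : (Fin 10 → ℤ) →ₗ[ℤ] ℤ) : ∃ y, ∀ x, I19 x y = φ x := by
  refine ⟨Fin.cons (φ (Pi.single 0 1)) fun i => -φ (Pi.single i.succ 1), fun x => ?_⟩
  conv_rhs => rw [pi_eq_sum_univ' x, map_sum, Fin.sum_univ_succ]
  simp only [I19, map_smul, smul_eq_mul, Fin.cons_zero, Fin.cons_succ, mul_neg,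
    Finset.sum_neg_distrib, sub_neg_eq_add]

/-- In `I^{1,9}` with `f = -3e₀ + e₁ + ⋯ + e₉`, the quotient lattice `f^⊥/ℤf` is an even
negative-definite unimodular lattice of rank `8` (hence isomorphic to `E₈` with negative
definite form): the form is even on `f^⊥`, it is negative on `f^⊥` away from `ℤf` (and zero
exactly on `ℤf`), `f^⊥` has rank `9` (so the quotient has rank `8`), and every linear
functional on `f^⊥` vanishing on `f` is represented by pairing with an element of `f^⊥`
(unimodularity of the quotient). -/
theorem stmt9 :
    (∀ x : Fin 10 → ℤ, I19 x fI19 = 0 → Even (I19 x x)) ∧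
    (∀ x : Fin 10 → ℤ, I19 x fI19 = 0 →
      I19 x x ≤ 0 ∧ (I19 x x = 0 ↔ ∃ n : ℤ, x = n • fI19)) ∧
    Module.finrank ℤ (LinearMap.ker pairf) = 9 ∧
    (∀ φ : (Fin 10 → ℤ) →ₗ[ℤ] ℤ, φ fI19 = 0 →
      ∃ y : Fin 10 → ℤ, I19 y fI19 = 0 ∧
        ∀ x : Fin 10 → ℤ, I19 x fI19 = 0 → φ x = I19 x y) := by
  refine ⟨fun x hx => ?_, fun x hx => ⟨I19_self_nonpos hx, I19_self_eq_zero_iff hx⟩,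
    finrank_ker_pairf, fun φ hφ => ?_⟩
  · simpa [hx] using even_I19_self_sub_of_odd odd_fI19 x
  · obtain ⟨y, hy⟩ := exists_I19_eq_apply φ
    exact ⟨y, by rw [I19_comm, hy, hφ], fun x _ => (hy x).symm⟩
end
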